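/- Divergence of the plane-wave density: for every A ∈ ℂ with A ≠ 0, every ω ∈ ℝ with ω ≠ 0, and each sign s ∈ {1, −1}, the nonnegative function x ↦ (1/ξ(x + 1/2))·|A·exp(i·ω·χ(x)) − s·(conj A)·exp(−i·ω·χ(x))|² (which equals |f_s(x)|²) is not integrable on [1, ∞); equivalently, ∫₁^∞ |f_s(x)|² dx = ∞. -/

import Mathlib

/-- ξ(y) = √(y² + 1/16). -/
noncomputable def xi (y : ℝ) : ℝ := Real.sqrt (y ^ 2 + 1 / 16)

/-- χ(x) = log(2·√(4x² + 4x + 1) + √(16x² + 16x + 5)). -/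
noncomputable def chi (x : ℝ) : ℝ :=
  Real.log (2 * Real.sqrt (4 * x ^ 2 + 4 * x + 1) + Real.sqrt (16 * x ^ 2 + 16 * x + 5))

/-- f_s(x) = ξ(x+1/2)^(−1/2)·(A·exp(i·ω·χ(x)) − s·(conj A)·exp(−i·ω·χ(x))). -/
noncomputable def fpw (A : ℂ) (ω s x : ℝ) : ℂ :=
  ((xi (x + 1/2) ^ (-(1/2) : ℝ) : ℝ) : ℂ) *
    (A * Complex.exp (Complex.I * ω * chi x) -
      (s : ℂ) * (starRingEnd ℂ) A * Complex.exp (-(Complex.I * ω * chi x)))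

lemma Qpos (x : ℝ) : 0 < 16 * x ^ 2 + 16 * x + 5 := by nlinarith [sq_nonneg (4*x+2)]

lemma sqrtQ_pos (x : ℝ) : 0 < Real.sqrt (16 * x ^ 2 + 16 * x + 5) :=
  Real.sqrt_pos.mpr (Qpos x)

lemma hasDerivAt_Q (x : ℝ) : HasDerivAt (fun x : ℝ => 16 * x ^ 2 + 16 * x + 5) (32 * x + 16) x := by
  have h := (((hasDerivAt_pow 2 x).const_mul (16:ℝ)).add ((hasDerivAt_id x).const_mul 16)).add_const 5
  refine h.congr_deriv ?_
  ring

lemma hasDerivAt_sqrtQ (x : ℝ) :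
    HasDerivAt (fun x : ℝ => Real.sqrt (16 * x ^ 2 + 16 * x + 5))
      ((16 * x + 8) / Real.sqrt (16 * x ^ 2 + 16 * x + 5)) x := by
  have h := (hasDerivAt_Q x).sqrt (ne_of_gt (Qpos x))
  convert h using 1
  rw [div_eq_div_iff (ne_of_gt (sqrtQ_pos x)) (by have := sqrtQ_pos x; positivity)]
  ring

lemma sqrt_h1 (x : ℝ) (hx : 0 < x) :
    Real.sqrt (4 * x ^ 2 + 4 * x + 1) = 2 * x + 1 := by
  rw [show 4 * x ^ 2 + 4 * x + 1 = (2*x+1)^2 by ring, Real.sqrt_sq (by linarith)]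

lemma hasDerivAt_chi (x : ℝ) (hx : 0 < x) :
    HasDerivAt chi (4 / Real.sqrt (16 * x ^ 2 + 16 * x + 5)) x := by
  have h1 : HasDerivAt (fun x : ℝ => 4 * x ^ 2 + 4 * x + 1) (8 * x + 4) x := by
    have h := (((hasDerivAt_pow 2 x).const_mul (4:ℝ)).add ((hasDerivAt_id x).const_mul 4)).add_const 1
    refine h.congr_deriv ?_; ring
  have h1pos : (0:ℝ) < 4 * x ^ 2 + 4 * x + 1 := by nlinarith
  have hs1 := h1.sqrt (ne_of_gt h1pos)
  have hu := ((hs1.const_mul 2).add (hasDerivAt_sqrtQ x))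
  set sQ := Real.sqrt (16 * x ^ 2 + 16 * x + 5) with hsQdef
  have hsQpos := sqrtQ_pos x
  have hupos : 0 < 2 * Real.sqrt (4 * x ^ 2 + 4 * x + 1) + sQ := by
    have := Real.sqrt_nonneg (4 * x ^ 2 + 4 * x + 1); linarith
  have hlog := hu.log (ne_of_gt hupos)
  refine hlog.congr_deriv (Eq.symm ?_)
  simp only [Pi.add_apply]
  rw [sqrt_h1 x hx]
  have hQ : sQ * sQ = 16 * x ^ 2 + 16 * x + 5 := Real.mul_self_sqrt (le_of_lt (Qpos x))
  rw [sqrt_h1 x hx] at hupos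
  field_simp
  rw [show x * 16 * (x + 1) + 5 = 16 * x ^ 2 + 16 * x + 5 by ring, ← hsQdef]
  linear_combination (x * 8 + 4) * (mul_inv_cancel₀ (show sQ ≠ 0 from hsQpos.ne'))

/-- auxiliary: G x = √Q / (8 ω (x+1)) -/
noncomputable def Gf (ω x : ℝ) : ℝ :=
  Real.sqrt (16 * x ^ 2 + 16 * x + 5) / (8 * ω * (x + 1))

lemma hasDerivAt_Gf (ω : ℝ) (hω : ω ≠ 0) (x : ℝ) (hx : 0 < x) :
    HasDerivAt (Gf ω)
      ((8 * x + 3) / (8 * ω * (x + 1) ^ 2 * Real.sqrt (16 * x ^ 2 + 16 * x + 5))) x := by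
  have hden : HasDerivAt (fun x : ℝ => 8 * ω * (x + 1)) (8 * ω) x := by
    have h := ((hasDerivAt_id x).add_const 1).const_mul (8 * ω)
    refine h.congr_deriv ?_; ring
  have hdne : 8 * ω * (x + 1) ≠ 0 := by
    have : x + 1 ≠ 0 := by linarith
    exact mul_ne_zero (by simpa using hω) this
  have h := (hasDerivAt_sqrtQ x).div hden hdne
  refine h.congr_deriv (Eq.symm ?_)
  set q := Real.sqrt (16 * x ^ 2 + 16 * x + 5) with hqdef
  have hQ : q ^ 2 = 16 * x ^ 2 + 16 * x + 5 := Real.sq_sqrt (le_of_lt (Qpos x))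
  have hsq : 0 < q := sqrtQ_pos x
  have hx1 : x + 1 ≠ 0 := by linarith
  field_simp
  linear_combination hQ

noncomputable def Theta (A : ℂ) (ω s σ : ℝ) (x : ℝ) : ℝ :=
  2 * ‖A‖ ^ 2 * Real.log (x + 1)
    - 2 * s * ((A ^ 2).re * Real.sin (2 * ω * chi x) + (A ^ 2).im * Real.cos (2 * ω * chi x))
        * Gf ω x
    - 2 * ‖A‖ ^ 2 * σ * Gf ω x

noncomputable def thetad (A : ℂ) (ω s σ : ℝ) (x : ℝ) : ℝ :=
  2 * ‖A‖ ^ 2 / (x + 1)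
    - 2 * s * (((A ^ 2).re * Real.cos (2 * ω * chi x) - (A ^ 2).im * Real.sin (2 * ω * chi x))
          * (8 * ω / Real.sqrt (16 * x ^ 2 + 16 * x + 5)) * Gf ω x
        + ((A ^ 2).re * Real.sin (2 * ω * chi x) + (A ^ 2).im * Real.cos (2 * ω * chi x))
          * ((8 * x + 3) / (8 * ω * (x + 1) ^ 2 * Real.sqrt (16 * x ^ 2 + 16 * x + 5))))
    - 2 * ‖A‖ ^ 2 * σ * ((8 * x + 3) / (8 * ω * (x + 1) ^ 2 * Real.sqrt (16 * x ^ 2 + 16 * x + 5)))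

lemma hasDerivAt_Theta (A : ℂ) (ω s σ : ℝ) (hω : ω ≠ 0) (x : ℝ) (hx : 0 < x) :
    HasDerivAt (Theta A ω s σ) (thetad A ω s σ x) x := by
  have hθ : HasDerivAt (fun x => 2 * ω * chi x)
      (2 * ω * (4 / Real.sqrt (16 * x ^ 2 + 16 * x + 5))) x :=
    (hasDerivAt_chi x hx).const_mul (2 * ω)
  have hsin : HasDerivAt (fun x => Real.sin (2 * ω * chi x))
      (Real.cos (2 * ω * chi x) * (2 * ω * (4 / Real.sqrt (16 * x ^ 2 + 16 * x + 5)))) x :=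
    hθ.sin
  have hcos : HasDerivAt (fun x => Real.cos (2 * ω * chi x))
      (-Real.sin (2 * ω * chi x) * (2 * ω * (4 / Real.sqrt (16 * x ^ 2 + 16 * x + 5)))) x :=
    hθ.cos
  have hlog : HasDerivAt (fun x : ℝ => 2 * ‖A‖ ^ 2 * Real.log (x + 1))
      (2 * ‖A‖ ^ 2 * (1 / (x + 1))) x := by
    have h := ((hasDerivAt_id' x).add_const 1).log (by intro hc; linarith)
    exact h.const_mul (2 * ‖A‖ ^ 2)
  have hG := hasDerivAt_Gf ω hω x hx
  have hosc : HasDerivAt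
      (fun x => (A ^ 2).re * Real.sin (2 * ω * chi x) + (A ^ 2).im * Real.cos (2 * ω * chi x))
      ((A ^ 2).re * (Real.cos (2 * ω * chi x) * (2 * ω * (4 / Real.sqrt (16 * x ^ 2 + 16 * x + 5))))
        + (A ^ 2).im * (-Real.sin (2 * ω * chi x) * (2 * ω * (4 / Real.sqrt (16 * x ^ 2 + 16 * x + 5))))) x :=
    (hsin.const_mul _).add (hcos.const_mul _)
  have h2 := (hosc.mul hG).const_mul (2 * s)
  have h3 := hG.const_mul (2 * ‖A‖ ^ 2 * σ)
  have h := (hlog.sub h2).sub h3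
  refine h.congr_deriv ?_ |>.congr_of_eventuallyEq ?_
  · simp only [thetad]; ring
  · filter_upwards with y; simp only [Theta, Pi.sub_apply, Pi.mul_apply]; ring

lemma norm_z_sq (A : ℂ) (s t : ℝ) (hs : s = 1 ∨ s = -1) :
    ‖A * Complex.exp ((t:ℂ) * Complex.I)
      - (s : ℂ) * (starRingEnd ℂ) A * Complex.exp (-((t:ℂ) * Complex.I))‖ ^ 2
    = 2 * ‖A‖ ^ 2
      - 2 * s * ((A ^ 2).re * Real.cos (2 * t) - (A ^ 2).im * Real.sin (2 * t)) := by
  have h1 : -((t:ℂ) * Complex.I) = ((-t : ℝ) : ℂ) * Complex.I := by push_cast; ring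
  rw [h1, Complex.exp_mul_I, Complex.exp_mul_I]
  rw [← Complex.ofReal_cos, ← Complex.ofReal_cos, ← Complex.ofReal_sin, ← Complex.ofReal_sin,
    Real.cos_neg, Real.sin_neg]
  have hA : ‖A‖ ^ 2 = A.re ^ 2 + A.im ^ 2 := by
    rw [Complex.sq_norm, Complex.normSq_apply]; ring
  rw [Complex.sq_norm, Complex.normSq_apply]
  have hc2 : Real.cos (2 * t) = 2 * Real.cos t ^ 2 - 1 := Real.cos_two_mul t
  have hs2 : Real.sin (2 * t) = 2 * Real.sin t * Real.cos t := Real.sin_two_mul t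
  have hpy : Real.sin t ^ 2 + Real.cos t ^ 2 = 1 := Real.sin_sq_add_cos_sq t
  have hre : (A ^ 2).re = A.re * A.re - A.im * A.im := by
    rw [pow_two, Complex.mul_re]
  have him : (A ^ 2).im = A.re * A.im + A.im * A.re := by
    rw [pow_two, Complex.mul_im]
  rw [hre, him, hA, hc2, hs2]
  simp only [Complex.sub_re, Complex.sub_im, Complex.mul_re, Complex.mul_im,
    Complex.add_re, Complex.add_im, Complex.ofReal_re, Complex.ofReal_im,
    Complex.I_re, Complex.I_im, Complex.conj_re, Complex.conj_im]
  rcases hs with rfl | rfl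
  · linear_combination (4 * A.re ^ 2) * hpy
  · linear_combination (4 * A.im ^ 2) * hpy

lemma xi_pos (y : ℝ) : 0 < xi y := Real.sqrt_pos.mpr (by positivity)

lemma norm_fpw_sq (A : ℂ) (ω s x : ℝ) (hs : s = 1 ∨ s = -1) :
    ‖fpw A ω s x‖ ^ 2
    = (2 * ‖A‖ ^ 2
        - 2 * s * ((A ^ 2).re * Real.cos (2 * ω * chi x)
          - (A ^ 2).im * Real.sin (2 * ω * chi x))) / xi (x + 1/2) := by
  have hxi := xi_pos (x + 1/2)
  have hexp : Complex.I * (ω:ℂ) * (chi x : ℂ) = ((ω * chi x : ℝ) : ℂ) * Complex.I := by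
    push_cast; ring
  rw [fpw, hexp, norm_mul, mul_pow]
  rw [norm_z_sq A s (ω * chi x) hs]
  have hc : ‖((xi (x + 1/2) ^ (-(1/2) : ℝ) : ℝ) : ℂ)‖ ^ 2 = (xi (x + 1/2))⁻¹ := by
    rw [Complex.norm_real, Real.norm_eq_abs,
      abs_of_nonneg (Real.rpow_nonneg hxi.le _)]
    rw [← Real.rpow_natCast (xi (x + 1/2) ^ (-(1/2) : ℝ)) 2, ← Real.rpow_mul hxi.le]
    norm_num [Real.rpow_neg_one]
  rw [hc, show 2 * (ω * chi x) = 2 * ω * chi x by ring]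
  ring

lemma abs_osc_le (A : ℂ) (u v : ℝ) (huv : u ^ 2 + v ^ 2 = 1) :
    |(A ^ 2).re * u + (A ^ 2).im * v| ≤ ‖A‖ ^ 2 := by
  have habr : (A ^ 2).re ^ 2 + (A ^ 2).im ^ 2 = (‖A‖ ^ 2) ^ 2 := by
    have h1 : (A^2).re ^2 + (A^2).im ^2 = Complex.normSq (A^2) := by
      rw [Complex.normSq_apply]; ring
    rw [h1, pow_two, Complex.normSq_mul]
    rw [Complex.sq_norm]
    ring
  have hr : (0:ℝ) ≤ ‖A‖ ^ 2 := by positivity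
  have key : ((A ^ 2).re * u + (A ^ 2).im * v) ^ 2 + ((A ^ 2).re * v - (A ^ 2).im * u) ^ 2
      = (‖A‖ ^ 2) ^ 2 := by
    linear_combination ((A ^ 2).re ^ 2 + (A ^ 2).im ^ 2) * huv + habr
  rw [abs_le]
  constructor <;> nlinarith [sq_nonneg ((A ^ 2).re * v - (A ^ 2).im * u)]

set_option maxHeartbeats 1000000 in
lemma thetad_le (A : ℂ) (ω s : ℝ) (hω : ω ≠ 0) (hs : s = 1 ∨ s = -1)
    (x : ℝ) (hx : 1 ≤ x) :
    thetad A ω s (if 0 < ω then 1 else -1) x ≤ ‖fpw A ω s x‖ ^ 2 := by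
  have hx0 : (0:ℝ) < x := by linarith
  have hsq := sqrtQ_pos x
  have hxi := xi_pos (x + 1/2)
  rw [norm_fpw_sq A ω s x hs, thetad]
  set a := (A ^ 2).re
  set b := (A ^ 2).im
  set c := Real.cos (2 * ω * chi x)
  set s' := Real.sin (2 * ω * chi x)
  set R := ‖A‖ ^ 2 with hRdef
  have hRpos : 0 ≤ R := by rw [hRdef]; positivity
  have hpy : s' ^ 2 + c ^ 2 = 1 := Real.sin_sq_add_cos_sq _
  have h1 : |a * c + b * (-s')| ≤ R := abs_osc_le A c (-s') (by nlinarith)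
  have h1' : -R ≤ a * c - b * s' ∧ a * c - b * s' ≤ R := by
    have h := abs_le.mp h1
    constructor <;> nlinarith [h.1, h.2]
  have h2 : |a * s' + b * c| ≤ R := abs_osc_le A s' c hpy
  have h2' := abs_le.mp h2
  clear_value a b c s' R
  clear hpy h1
  set u := a * s' + b * c with hu
  set v := a * c - b * s' with hv
  clear_value u v
  -- G * (8ω/√Q) = 1/(x+1)
  have hGmul : v * (8 * ω / Real.sqrt (16 * x ^ 2 + 16 * x + 5)) * Gf ω x = v * (1 / (x + 1)) := by
    rw [Gf]
    have hx1 : x + 1 ≠ 0 := by linarith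
    field_simp
  rw [hGmul]
  have hN : 0 ≤ 2 * R - 2 * s * v := by
    rcases hs with rfl | rfl <;> nlinarith [h1'.1, h1'.2]
  have hxile : xi (x + 1/2) ≤ x + 1 := by
    rw [xi]
    calc Real.sqrt ((x + 1/2) ^ 2 + 1/16) ≤ Real.sqrt ((x+1)^2) :=
          Real.sqrt_le_sqrt (by nlinarith)
      _ = x + 1 := Real.sqrt_sq (by linarith)
  have hdiv : (2 * R - 2 * s * v) / (x + 1) ≤ (2 * R - 2 * s * v) / xi (x + 1/2) :=
    div_le_div_of_nonneg_left hN hxi hxile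
  refine le_trans ?_ hdiv
  set gd := (8 * x + 3) / (8 * ω * (x + 1) ^ 2 * Real.sqrt (16 * x ^ 2 + 16 * x + 5)) with hgd
  have hrest : - (2 * s * (u * gd)) - 2 * R * (if 0 < ω then 1 else -1) * gd ≤ 0 := by
    by_cases hωpos : 0 < ω
    · simp only [if_pos hωpos]
      have hgdpos : 0 ≤ gd := by
        rw [hgd]
        apply div_nonneg (by linarith)
        have h8 : (0:ℝ) < 8 * ω := by linarith
        have hp2 : (0:ℝ) < (x+1)^2 := by positivity
        positivity
      clear_value gd
      rcases hs with rfl | rfl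
      · have hp : 0 ≤ (R + u) * gd := mul_nonneg (by linarith [h2'.1]) hgdpos
        nlinarith [hp]
      · have hp : 0 ≤ (R - u) * gd := mul_nonneg (by linarith [h2'.2]) hgdpos
        nlinarith [hp]
    · simp only [if_neg hωpos]
      have hωneg : ω < 0 := lt_of_le_of_ne (not_lt.mp hωpos) hω
      have hgdneg : gd ≤ 0 := by
        rw [hgd]
        apply div_nonpos_of_nonneg_of_nonpos (by linarith)
        have h8 : 8 * ω < 0 := by linarith
        have hp2 : (0:ℝ) < (x+1)^2 := by positivity
        nlinarith [mul_pos (mul_pos (neg_pos.mpr h8) hp2) hsq]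
      clear_value gd
      rcases hs with rfl | rfl
      · have hp : 0 ≤ (R - u) * (-gd) := mul_nonneg (by linarith [h2'.2]) (neg_nonneg.mpr hgdneg)
        nlinarith [hp]
      · have hp : 0 ≤ (R + u) * (-gd) := mul_nonneg (by linarith [h2'.1]) (neg_nonneg.mpr hgdneg)
        nlinarith [hp]
  clear_value gd
  have hx1 : x + 1 ≠ 0 := by linarith
  have hsplit : 2 * R / (x + 1)
      - 2 * s * (v * (1 / (x + 1)) + u * gd)
      - 2 * R * (if 0 < ω then 1 else -1) * gd
      = (2 * R - 2 * s * v) / (x + 1)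
        + (- (2 * s * (u * gd)) - 2 * R * (if 0 < ω then 1 else -1) * gd) := by
    split_ifs <;> (field_simp; ring)
  rw [hsplit]
  linarith [hrest]

lemma Gf_abs_le (ω : ℝ) (hω : ω ≠ 0) (x : ℝ) (hx : 1 ≤ x) :
    |Gf ω x| ≤ 1 / (2 * |ω|) := by
  have hx1 : (0:ℝ) < x + 1 := by linarith
  have hsq := sqrtQ_pos x
  have hQle : Real.sqrt (16 * x ^ 2 + 16 * x + 5) ≤ 4 * (x + 1) := by
    calc Real.sqrt (16 * x ^ 2 + 16 * x + 5) ≤ Real.sqrt ((4*(x+1))^2) :=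
          Real.sqrt_le_sqrt (by nlinarith)
      _ = 4 * (x + 1) := Real.sqrt_sq (by linarith)
  rw [Gf, abs_div, abs_of_nonneg hsq.le, abs_mul, abs_mul]
  rw [div_le_div_iff₀ (by positivity) (by positivity)]
  have h8 : |(8:ℝ)| = 8 := by norm_num
  rw [h8, abs_of_pos hx1]
  nlinarith [abs_pos.mpr hω, hQle, hsq]

lemma continuousAt_thetad (A : ℂ) (ω s σ : ℝ) (hω : ω ≠ 0) (x : ℝ) (hx : 0 < x) :
    ContinuousAt (thetad A ω s σ) x := by
  have hχ : ContinuousAt (fun x => 2 * ω * chi x) x :=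
    ((hasDerivAt_chi x hx).continuousAt).const_smul (2 * ω) |>.congr ?hc
  case hc => filter_upwards with y; simp [smul_eq_mul]
  have hsQ : ContinuousAt (fun x : ℝ => Real.sqrt (16 * x ^ 2 + 16 * x + 5)) x :=
    (hasDerivAt_sqrtQ x).continuousAt
  have hG : ContinuousAt (Gf ω) x := (hasDerivAt_Gf ω hω x hx).continuousAt
  have hx1 : x + 1 ≠ 0 := by linarith
  have hsin : ContinuousAt (fun x => Real.sin (2 * ω * chi x)) x :=
    Real.continuous_sin.continuousAt.comp hχ
  have hcos : ContinuousAt (fun x => Real.cos (2 * ω * chi x)) x :=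
    Real.continuous_cos.continuousAt.comp hχ
  have hgd : ContinuousAt (fun x : ℝ =>
      (8 * x + 3) / (8 * ω * (x + 1) ^ 2 * Real.sqrt (16 * x ^ 2 + 16 * x + 5))) x := by
    apply ContinuousAt.div
    · fun_prop
    · exact (continuousAt_const.mul (((continuousAt_id.add continuousAt_const).pow 2))).mul hsQ
    · have := sqrtQ_pos x
      intro hc
      have h1 : 8 * ω * (x+1)^2 ≠ 0 := by
        apply mul_ne_zero (by simpa using hω)
        positivity
      exact (mul_ne_zero h1 this.ne') hc
  apply ContinuousAt.sub
  apply ContinuousAt.sub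
  · exact continuousAt_const.div (continuousAt_id.add continuousAt_const) hx1
  · apply continuousAt_const.mul
    apply ContinuousAt.add
    · apply ContinuousAt.mul
      apply ContinuousAt.mul
      · exact (continuousAt_const.mul hcos).sub (continuousAt_const.mul hsin)
      · exact continuousAt_const.div hsQ (sqrtQ_pos x).ne'
      · exact hG
    · exact ((continuousAt_const.mul hsin).add (continuousAt_const.mul hcos)).mul hgd
  · exact continuousAt_const.mul hgd

/-- Divergence of the plane-wave density: for A ≠ 0, ω ≠ 0 and s = ±1 the
function x ↦ |f_s(x)|² is not integrable on [1, ∞), i.e. ∫₁^∞ |f_s|² dx = ∞. -/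
theorem planeWave_not_integrable (A : ℂ) (hA : A ≠ 0) (ω : ℝ) (hω : ω ≠ 0)
    (s : ℝ) (hs : s = 1 ∨ s = -1) :
    ¬ MeasureTheory.IntegrableOn (fun x : ℝ => ‖fpw A ω s x‖ ^ 2) (Set.Ici 1) := by
  intro H
  set σ : ℝ := if 0 < ω then 1 else -1 with hσ
  set r : ℝ := ‖A‖ ^ 2 with hr
  have hrpos : 0 < r := by
    rw [hr]
    have : 0 < ‖A‖ := norm_pos_iff.mpr hA
    positivity
  set M : ℝ := ∫ x in Set.Ici (1:ℝ), ‖fpw A ω s x‖ ^ 2 with hM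
  have hMnonneg : 0 ≤ M :=
    MeasureTheory.setIntegral_nonneg measurableSet_Ici (fun x _ => by positivity)
  -- For every T ≥ 1 : Theta T - Theta 1 ≤ M
  have hkey : ∀ T : ℝ, 1 ≤ T → Theta A ω s σ T - Theta A ω s σ 1 ≤ M := by
    intro T hT
    have huIcc : Set.uIcc (1:ℝ) T = Set.Icc 1 T := Set.uIcc_of_le hT
    have hderiv : ∀ y ∈ Set.uIcc (1:ℝ) T,
        HasDerivAt (Theta A ω s σ) (thetad A ω s σ y) y := by
      intro y hy
      rw [huIcc] at hy
      exact hasDerivAt_Theta A ω s σ hω y (by linarith [hy.1])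
    have hcont : ContinuousOn (thetad A ω s σ) (Set.uIcc (1:ℝ) T) := by
      intro y hy
      rw [huIcc] at hy
      exact (continuousAt_thetad A ω s σ hω y (by linarith [hy.1])).continuousWithinAt
    have hInt : IntervalIntegrable (thetad A ω s σ) MeasureTheory.volume 1 T :=
      hcont.intervalIntegrable
    have hftc := intervalIntegral.integral_eq_sub_of_hasDerivAt hderiv hInt
    have hIntF : IntervalIntegrable (fun x : ℝ => ‖fpw A ω s x‖ ^ 2) MeasureTheory.volume 1 T := by
      apply MeasureTheory.IntegrableOn.intervalIntegrable
      apply H.mono_set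
      rw [huIcc]
      exact fun y hy => hy.1
    have hmono : ∫ y in (1:ℝ)..T, thetad A ω s σ y
        ≤ ∫ y in (1:ℝ)..T, ‖fpw A ω s y‖ ^ 2 := by
      apply intervalIntegral.integral_mono_on hT hInt hIntF
      intro y hy
      exact thetad_le A ω s hω hs y hy.1
    have hle : ∫ y in (1:ℝ)..T, ‖fpw A ω s y‖ ^ 2 ≤ M := by
      rw [intervalIntegral.integral_of_le hT, hM]
      apply MeasureTheory.setIntegral_mono_set H
      · filter_upwards with y; positivity
      · apply Filter.Eventually.of_forall
        exact fun y hy => hy.1.le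
    linarith [hftc ▸ hmono, hle]
  -- bound the bounded parts of Theta
  have hThetaLB : ∀ T : ℝ, 1 ≤ T →
      2 * r * Real.log (T + 1) - 2 * r / |ω| ≤ Theta A ω s σ T := by
    intro T hT
    rw [Theta]
    have hGb := Gf_abs_le ω hω T hT
    have hoscb : |(A ^ 2).re * Real.sin (2 * ω * chi T) + (A ^ 2).im * Real.cos (2 * ω * chi T)|
        ≤ r := abs_osc_le A _ _ (Real.sin_sq_add_cos_sq _)
    have hsabs : |s| = 1 := by rcases hs with rfl | rfl <;> norm_num
    have hσabs : |σ| = 1 := by rw [hσ]; split <;> norm_num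
    have h1 : |2 * s * ((A ^ 2).re * Real.sin (2 * ω * chi T)
        + (A ^ 2).im * Real.cos (2 * ω * chi T)) * Gf ω T| ≤ 2 * r * (1 / (2 * |ω|)) := by
      rw [abs_mul, abs_mul, abs_mul, hsabs, abs_of_nonneg (by norm_num : (0:ℝ) ≤ 2)]
      have := abs_nonneg ((A ^ 2).re * Real.sin (2 * ω * chi T)
        + (A ^ 2).im * Real.cos (2 * ω * chi T))
      have := abs_nonneg (Gf ω T)
      nlinarith [hrpos]
    have h2 : |2 * r * σ * Gf ω T| ≤ 2 * r * (1 / (2 * |ω|)) := by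
      rw [abs_mul, abs_mul, abs_mul, hσabs, abs_of_nonneg (by norm_num : (0:ℝ) ≤ 2),
        abs_of_nonneg hrpos.le]
      nlinarith [hrpos]
    have habs1 := abs_le.mp h1
    have habs2 := abs_le.mp h2
    have hcomb : 2 * r * (1 / (2 * |ω|)) = r / |ω| := by
      have : |ω| ≠ 0 := abs_ne_zero.mpr hω
      field_simp
    rw [hcomb] at habs1 habs2
    have : 2 * r / |ω| = r / |ω| + r / |ω| := by ring
    rw [← hr]
    linarith [habs1.1, habs2.1]
  -- choose T large
  set C : ℝ := (M + |Theta A ω s σ 1| + 2 * r / |ω| + 1) / (2 * r) with hC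
  have hCpos : 0 ≤ C := by
    rw [hC]
    apply div_nonneg _ (by linarith)
    have h1 : 0 ≤ 2 * r / |ω| := by positivity
    have h2 := abs_nonneg (Theta A ω s σ 1)
    linarith
  set T : ℝ := Real.exp C with hT
  have hT1 : 1 ≤ T := by
    rw [hT]; exact Real.one_le_exp hCpos
  have hlogT : Real.log T = C := Real.log_exp C
  have hlog1 : C ≤ Real.log (T + 1) := by
    rw [← hlogT]
    apply Real.log_le_log (by positivity)
    linarith
  have hfinal := hkey T hT1
  have hLB := hThetaLB T hT1
  have h2rC : 2 * r * C = M + |Theta A ω s σ 1| + 2 * r / |ω| + 1 := by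
    rw [hC]
    field_simp
  have : 2 * r * Real.log (T + 1) ≥ 2 * r * C :=
    mul_le_mul_of_nonneg_left hlog1 (by linarith)
  have habs := le_abs_self (Theta A ω s σ 1)
  have habs' := neg_abs_le (Theta A ω s σ 1)
  linarith
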